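/- In a symbolic (Dolev–Yao style) model with free encryption, an adversary whose initial knowledge consists only of node identities and intercepted ciphertexts E(K, m_1), ..., E(K, m_n), where the key K is not derivable from its knowledge, cannot derive the secret V when V only occurs inside the plaintexts m_i. Formally, V is not in the deductive closure of the adversary's knowledge set. -/
import Mathlib


/-- Symbolic (Dolev–Yao) messages: atoms, pairs and symbolic encryptions. -/
inductive Message where
  | atom : ℕ → Message
  | pair : Message → Message → Message
  | enc : Message → Message → Message
deriving DecidableEq

/-- Dolev–Yao deduction relation. -/
inductive Deduc (S : Set Message) : Message → Prop
  | mem {m} : m ∈ S → Deduc S m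
  | pair {m n} : Deduc S m → Deduc S n → Deduc S (Message.pair m n)
  | fst {m n} : Deduc S (Message.pair m n) → Deduc S m
  | snd {m n} : Deduc S (Message.pair m n) → Deduc S n
  | enc {k m} : Deduc S k → Deduc S m → Deduc S (Message.enc k m)
  | dec {k m} : Deduc S (Message.enc k m) → Deduc S k → Deduc S m

/-- `occurs V m`: the message `V` occurs as a submessage of `m`. -/
inductive Occurs (V : Message) : Message → Prop
  | refl : Occurs V V
  | pairL {a b} : Occurs V a → Occurs V (Message.pair a b)
  | pairR {a b} : Occurs V b → Occurs V (Message.pair a b)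
  | encK {k m} : Occurs V k → Occurs V (Message.enc k m)
  | encM {k m} : Occurs V m → Occurs V (Message.enc k m)

/-- `Out V K m`: `V` occurs in `m` outside of any encryption with key `K`. -/
def Out (V K : Message) : Message → Prop
  | .atom a => Message.atom a = V
  | .pair a b => Out V K a ∨ Out V K b
  | .enc k m => k ≠ K ∧ (Out V K k ∨ Out V K m)

/-- If the adversary's initial knowledge is a set of identities (atoms not containing
the secret `V`) together with ciphertexts `E(K, mᵢ)`, and the key `K` is not
deducible, then the secret `V` (occurring only inside the plaintexts) is not
deducible. -/
theorem secret_not_deducible (I : Set Message) (K V : Message)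
    (n : ℕ) (msgs : Fin n → Message)
    (hIatoms : ∀ x ∈ I, ∃ a, x = Message.atom a)
    (hVatom : ∃ v, V = Message.atom v)
    (hVnotI : ∀ x ∈ I, ¬ Occurs V x)
    (S₀ : Set Message)
    (hS₀ : S₀ = I ∪ { c | ∃ i : Fin n, c = Message.enc K (msgs i) })
    (hK : ¬ Deduc S₀ K) :
    ¬ Deduc S₀ V := by
  have main : ∀ m, Deduc S₀ m → ¬ Out V K m := by
    intro m hm
    induction hm with
    | mem h =>
      rw [hS₀] at h
      rcases h with h | ⟨i, rfl⟩
      · obtain ⟨a, rfl⟩ := hIatoms _ h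
        intro hout
        exact hVnotI _ h (hout ▸ Occurs.refl)
      · rintro ⟨hne, -⟩; exact hne rfl
    | pair _ _ iha ihb => rintro (h | h) <;> [exact iha h; exact ihb h]
    | fst _ ih => intro h; exact ih (Or.inl h)
    | snd _ ih => intro h; exact ih (Or.inr h)
    | enc _ _ ihk ihm =>
      rintro ⟨-, h | h⟩ <;> [exact ihk h; exact ihm h]
    | dec henc hk ihenc ihk =>
      rename_i k m'
      intro h
      by_cases hkK : k = K
      · exact hK (hkK ▸ hk)
      · exact ihenc ⟨hkK, Or.inr h⟩
  intro hV
  obtain ⟨v, rfl⟩ := hVatom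
  exact main _ hV rfl
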